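/- arXiv:1205.1580 — 3 statements merged into one kernel-verified Lean document; each statement's English description precedes it below -/
import Mathlib

section
/- Let f, g be convex functions on ℝ^d, Q an orthogonal d×d matrix, x₀, y₀ ∈ ℝ^d, and z₀ = x₀ + Q y₀. Then (x₀, y₀) is the unique optimal point of the problem: minimize f(x) subject to g(y) ≤ g(y₀) and x + Qy = z₀, if and only if F(f, x₀) ∩ (−Q · F(g, y₀)) = {0}, where F denotes the feasible cone. -/
open Set

/-- The feasible cone of a convex function `f` at a point `x`:
`F(f,x) = ⋃_{λ>0} {δ : f(x + λδ) ≤ f(x)}`. -/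
def feasibleCone {E : Type*} [AddCommGroup E] [Module ℝ E] (f : E → ℝ) (x : E) : Set E :=
  ⋃ (t : ℝ) (_ : 0 < t), {δ | f (x + t • δ) ≤ f x}

/-!
If `δ ∈ F(f, x₀)` and `-δ = Q ε` with `ε ∈ F(g, y₀)`, then by convexity the steps `t δ` and `t ε`
stay in the sublevel sets for one common `t > 0`, and `(x₀ + t δ, y₀ + t ε)` is a feasible point no
worse than `(x₀, y₀)`; it differs from it unless `δ = 0`. Conversely, a feasible `(x, y)` with
`f x ≤ f x₀` yields the directions `x - x₀ ∈ F(f, x₀)` and `y - y₀ ∈ F(g, y₀)` with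
`x - x₀ = -Q (y - y₀)`, and injectivity of `Q` forces `(x, y) = (x₀, y₀)`.
-/

section FeasibleCone

variable {E F : Type*} [AddCommGroup E] [Module ℝ E] [AddCommGroup F] [Module ℝ F]

theorem mem_feasibleCone {f : E → ℝ} {x δ : E} :
    δ ∈ feasibleCone f x ↔ ∃ t : ℝ, 0 < t ∧ f (x + t • δ) ≤ f x := by
  simp [feasibleCone]

theorem zero_mem_feasibleCone (f : E → ℝ) (x : E) : 0 ∈ feasibleCone f x :=
  mem_feasibleCone.2 ⟨1, one_pos, by simp⟩

theorem sub_mem_feasibleCone {f : E → ℝ} {x y : E} (h : f y ≤ f x) :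
    y - x ∈ feasibleCone f x :=
  mem_feasibleCone.2 ⟨1, one_pos, by simpa using h⟩

theorem ConvexOn.le_of_add_smul_le {f : E → ℝ} (hf : ConvexOn ℝ univ f) {x δ : E} {s t : ℝ}
    (ht : 0 ≤ t) (hts : t ≤ s) (h : f (x + s • δ) ≤ f x) : f (x + t • δ) ≤ f x := by
  have hS : Convex ℝ ((fun v => x + v) ⁻¹' {y | f y ≤ f x}) := by
    simpa using (hf.convex_le (f x)).translate_preimage_right x
  rcases ht.eq_or_lt with rfl | ht
  · simp
  have hs : 0 < s := ht.trans_le hts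
  have key := hS.smul_mem_of_zero_mem (by simp) (show s • δ ∈ _ from h)
    ⟨div_nonneg ht.le hs.le, div_le_one_of_le₀ hts hs.le⟩
  rwa [smul_smul, div_mul_cancel₀ t hs.ne'] at key

theorem ConvexOn.exists_common_step {f : E → ℝ} {g : F → ℝ}
    (hf : ConvexOn ℝ univ f) (hg : ConvexOn ℝ univ g) {x δ : E} {y ε : F}
    (hδ : δ ∈ feasibleCone f x) (hε : ε ∈ feasibleCone g y) :
    ∃ t : ℝ, 0 < t ∧ f (x + t • δ) ≤ f x ∧ g (y + t • ε) ≤ g y := by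
  obtain ⟨s, hs, hfs⟩ := mem_feasibleCone.1 hδ
  obtain ⟨r, hr, hgr⟩ := mem_feasibleCone.1 hε
  exact ⟨min s r, lt_min hs hr, hf.le_of_add_smul_le (lt_min hs hr).le (min_le_left s r) hfs,
    hg.le_of_add_smul_le (lt_min hs hr).le (min_le_right s r) hgr⟩

theorem feasibleCone_inter_neg_image_eq_zero_iff {f : E → ℝ} {g : F → ℝ}
    (hf : ConvexOn ℝ univ f) (hg : ConvexOn ℝ univ g) {Q : F →ₗ[ℝ] E}
    (hQ : Function.Injective Q) (x₀ : E) (y₀ : F) :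
    feasibleCone f x₀ ∩ ((fun v => -(Q v)) '' feasibleCone g y₀) = {0} ↔
      ∀ x y, x + Q y = x₀ + Q y₀ → g y ≤ g y₀ → (x, y) ≠ (x₀, y₀) → f x₀ < f x := by
  constructor
  · intro H x y hxy hgy hne
    by_contra! hfx
    have hmem : x - x₀ ∈ feasibleCone f x₀ ∩ ((fun v => -(Q v)) '' feasibleCone g y₀) :=
      ⟨sub_mem_feasibleCone hfx, y - y₀, sub_mem_feasibleCone hgy, by
        simp only [map_sub]; linear_combination (norm := module) -hxy⟩
    rw [H, mem_singleton_iff, sub_eq_zero] at hmem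
    subst hmem
    exact hne (by rw [hQ (add_left_cancel hxy)])
  · intro H
    refine subset_antisymm ?_ (singleton_subset_iff.2
      ⟨zero_mem_feasibleCone f x₀, 0, zero_mem_feasibleCone g y₀, by simp⟩)
    rintro _ ⟨hδ, ε, hε, rfl⟩
    by_contra hne
    obtain ⟨t, ht, hft, hgt⟩ := hf.exists_common_step hg hδ hε
    refine (H _ _ ?_ hgt fun h => hne ?_).not_ge hft
    · simp only [map_add, map_smul]; module
    · simpa [ht.ne'] using congrArg Prod.fst h

end FeasibleCone

/-- Geometric characterization of success of the convex demixing method: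
`(x₀, y₀)` is the unique optimal point of `min f(x) s.t. g(y) ≤ g(y₀), x + Qy = z₀`
if and only if `F(f, x₀) ∩ (−Q F(g, y₀)) = {0}`. -/
theorem stmt3 {d : ℕ} (f g : EuclideanSpace ℝ (Fin d) → ℝ)
    (hf : ConvexOn ℝ Set.univ f) (hg : ConvexOn ℝ Set.univ g)
    (Q : EuclideanSpace ℝ (Fin d) ≃ₗᵢ[ℝ] EuclideanSpace ℝ (Fin d))
    (x₀ y₀ z₀ : EuclideanSpace ℝ (Fin d)) (hz : z₀ = x₀ + Q y₀) :
    (∀ x y : EuclideanSpace ℝ (Fin d),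
        x + Q y = z₀ → g y ≤ g y₀ → (x, y) ≠ (x₀, y₀) → f x₀ < f x)
      ↔ feasibleCone f x₀ ∩ ((fun v => -(Q v)) '' feasibleCone g y₀) = {0} := by
  subst hz
  exact (feasibleCone_inter_neg_image_eq_zero_iff hf hg (Q := Q.toLinearMap) Q.injective
    x₀ y₀).symm
end

section
/- For every θ ∈ [0,1], (1/d) · log(binomial(d, ⌈θd⌉)) converges to H(θ) = −θ log θ − (1−θ) log(1−θ) as d → ∞, and the convergence is uniform in θ over [0,1]. -/
/-!
Of the `k + m + 1` terms `C(k+m, j) k^j m^(k+m-j)` in the binomial expansion of `(k + m)^(k + m)`,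
the one at `j = k` is the largest. Hence `C(d, k) k^k (d-k)^(d-k)` lies between `d^d / (d+1)` and
`d^d`, and taking logarithms, `|log C(d, k) - d H(k/d)| ≤ log (d + 1)`. Since `⌈θ d⌉ / d` is
within `1/d` of `θ`, uniform continuity of `H` on `[0, 1]` and `log (d + 1) / d → 0` give uniform
convergence.
-/

open Real Filter Finset Topology

def binomTerm (x y n j : ℕ) : ℕ := x ^ j * y ^ (n - j) * n.choose j

section BinomTerm

variable {x y n j : ℕ}

lemma binomTerm_succ_mul (hj : j < n) :
    binomTerm x y n (j + 1) * ((j + 1) * y) = binomTerm x y n j * ((n - j) * x) := by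
  have hpow : y ^ (n - j) = y ^ (n - (j + 1)) * y := by rw [← pow_succ]; congr 1; omega
  have hchoose := Nat.choose_succ_right_eq n j
  unfold binomTerm
  rw [hpow, pow_succ]
  linear_combination (x ^ j * x * y ^ (n - (j + 1)) * y) * hchoose

lemma binomTerm_le_succ (hx : 0 < x) (hj : j < n)
    (h : (j + 1) * y ≤ (n - j) * x) : binomTerm x y n j ≤ binomTerm x y n (j + 1) := by
  refine Nat.le_of_mul_le_mul_right ?_ (Nat.mul_pos (Nat.sub_pos_of_lt hj) hx)
  rw [← binomTerm_succ_mul hj]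
  exact Nat.mul_le_mul_left _ h

lemma binomTerm_succ_le (hy : 0 < y) (hj : j < n)
    (h : (n - j) * x ≤ (j + 1) * y) : binomTerm x y n (j + 1) ≤ binomTerm x y n j := by
  refine Nat.le_of_mul_le_mul_right ?_ (Nat.mul_pos j.succ_pos hy)
  rw [binomTerm_succ_mul hj]
  exact Nat.mul_le_mul_left _ h

lemma binomTerm_le_add_pow (hj : j ≤ n) : binomTerm x y n j ≤ (x + y) ^ n := by
  rw [add_pow]
  exact single_le_sum (fun _ _ => Nat.zero_le _) (mem_range.2 (Nat.lt_succ_of_le hj))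

end BinomTerm

lemma binomTerm_le_binomTerm_self {k m j : ℕ} (hj : j ≤ k + m) :
    binomTerm k m (k + m) j ≤ binomTerm k m (k + m) k := by
  rcases le_total j k with hjk | hkj
  · refine monotoneOn_of_le_succ Set.ordConnected_Iic (fun i _ _ hi => ?_) hjk le_rfl hjk
    simp only [Order.succ_eq_add_one, Set.mem_Iic] at hi ⊢
    exact binomTerm_le_succ (by omega) (by omega)
      (by rw [mul_comm _ k]; exact Nat.mul_le_mul hi (by omega))
  · refine antitoneOn_of_succ_le Set.ordConnected_Icc (fun i _ hi hi' => ?_)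
      ⟨le_rfl, by omega⟩ ⟨hkj, hj⟩ hkj
    simp only [Order.succ_eq_add_one, Set.mem_Icc] at hi hi' ⊢
    exact binomTerm_succ_le (by omega) (by omega)
      (by rw [mul_comm _ m]; exact Nat.mul_le_mul (by omega) (by omega))

lemma add_pow_le_succ_mul_binomTerm_self (k m : ℕ) :
    (k + m) ^ (k + m) ≤ (k + m + 1) * binomTerm k m (k + m) k := by
  rw [add_pow]
  calc ∑ j ∈ range (k + m + 1), binomTerm k m (k + m) j
      ≤ ∑ _j ∈ range (k + m + 1), binomTerm k m (k + m) k :=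
        sum_le_sum fun j hj => binomTerm_le_binomTerm_self (Nat.lt_succ_iff.1 (mem_range.1 hj))
    _ = (k + m + 1) * binomTerm k m (k + m) k := by rw [sum_const, card_range, smul_eq_mul]

lemma mul_binEntropy_div_add (a b : ℝ) :
    (a + b) * binEntropy (a / (a + b)) = negMulLog a + negMulLog b - negMulLog (a + b) := by
  rcases eq_or_ne (a + b) 0 with hab | hab
  · obtain rfl : b = -a := by linarith
    simp [negMulLog, log_neg_eq_log]
  have ha := negMulLog_mul (a / (a + b)) (a + b)
  have hb := negMulLog_mul (b / (a + b)) (a + b)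
  have hsum : a / (a + b) + b / (a + b) = 1 := by rw [← add_div, div_self hab]
  rw [div_mul_cancel₀ _ hab] at ha hb
  rw [binEntropy_eq_negMulLog_add_negMulLog_one_sub, ← hsum, add_sub_cancel_left]
  linear_combination -ha - hb - negMulLog (a + b) * hsum

lemma binomTerm_self_pos (k m : ℕ) : 0 < binomTerm k m (k + m) k :=
  Nat.pos_of_mul_pos_left (Nat.pow_self_pos.trans_le (add_pow_le_succ_mul_binomTerm_self k m))

lemma log_binomTerm_self (k m : ℕ) :
    log (binomTerm k m (k + m) k) = log ((k + m).choose k) - negMulLog k - negMulLog m := by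
  have hT := (binomTerm_self_pos k m).ne'
  simp only [binomTerm, Nat.add_sub_cancel_left] at hT ⊢
  obtain ⟨⟨hk, hm⟩, hC⟩ := mul_ne_zero_iff.1 hT |>.imp_left mul_ne_zero_iff.1
  push_cast
  rw [log_mul (by exact_mod_cast mul_ne_zero hk hm) (by exact_mod_cast hC),
    log_mul (by exact_mod_cast hk) (by exact_mod_cast hm), log_pow, log_pow]
  simp only [negMulLog]
  ring

lemma abs_log_choose_add_sub_negMulLog_le (k m : ℕ) :
    |log ((k + m).choose k) - (negMulLog k + negMulLog m - negMulLog (k + m))|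
      ≤ log (k + m + 1) := by
  have hT : (0 : ℝ) < binomTerm k m (k + m) k := by exact_mod_cast binomTerm_self_pos k m
  have hpow : log (((k + m) ^ (k + m) : ℕ) : ℝ) = -negMulLog (k + m) := by
    push_cast; rw [log_pow, negMulLog]; push_cast; ring
  have hupper : log (binomTerm k m (k + m) k) ≤ log (((k + m) ^ (k + m) : ℕ) : ℝ) :=
    log_le_log hT (by exact_mod_cast binomTerm_le_add_pow (Nat.le_add_right k m))
  have hlower : log (((k + m) ^ (k + m) : ℕ) : ℝ)
      ≤ log (k + m + 1) + log (binomTerm k m (k + m) k) := by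
    rw [← log_mul (by positivity) hT.ne']
    refine log_le_log (by exact_mod_cast Nat.pow_self_pos) ?_
    exact_mod_cast add_pow_le_succ_mul_binomTerm_self k m
  have hlog : 0 ≤ log ((k : ℝ) + m + 1) := log_nonneg (le_add_of_nonneg_left (by positivity))
  rw [log_binomTerm_self, hpow] at hupper hlower
  rw [abs_le]
  constructor <;> linarith

lemma abs_log_choose_sub_mul_binEntropy_le {d k : ℕ} (hk : k ≤ d) :
    |log (d.choose k) - d * binEntropy (k / d)| ≤ log (d + 1) := by
  obtain ⟨m, rfl⟩ := Nat.exists_eq_add_of_le hk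
  push_cast
  rw [mul_binEntropy_div_add]
  exact abs_log_choose_add_sub_negMulLog_le k m

lemma dist_binEntropy_div_log_choose_le {d k : ℕ} (hd : 0 < d) (hk : k ≤ d) :
    dist (binEntropy (k / d)) (1 / d * log (d.choose k)) ≤ log (d + 1) / d := by
  have hd' : (0 : ℝ) < d := by exact_mod_cast hd
  rw [dist_comm, Real.dist_eq, show 1 / d * log (d.choose k) - binEntropy (k / d)
      = (log (d.choose k) - d * binEntropy (k / d)) / d by field_simp, abs_div, abs_of_pos hd']
  exact div_le_div_of_nonneg_right (abs_log_choose_sub_mul_binEntropy_le hk) hd'.le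

lemma tendsto_log_add_one_div_atTop :
    Tendsto (fun d : ℕ => log (d + 1) / d) atTop (𝓝 0) := by
  have := (tendsto_pow_log_div_mul_add_atTop 1 (-1) 1 one_ne_zero).comp
    (tendsto_atTop_add_const_right _ 1 tendsto_natCast_atTop_atTop)
  refine this.congr fun d => ?_
  simp

lemma natCeil_mul_le {θ : ℝ} (hθ : θ ≤ 1) (d : ℕ) : ⌈θ * d⌉₊ ≤ d :=
  Nat.ceil_le.2 (mul_le_of_le_one_left d.cast_nonneg hθ)

lemma dist_natCeil_mul_div_le {θ : ℝ} (hθ : 0 ≤ θ) {d : ℕ} (hd : 0 < d) :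
    dist (⌈θ * d⌉₊ / d : ℝ) θ ≤ 1 / d := by
  have hd' : (0 : ℝ) < d := by exact_mod_cast hd
  rw [Real.dist_eq, show (⌈θ * d⌉₊ / d : ℝ) - θ = (⌈θ * d⌉₊ - θ * d) / d by field_simp,
    abs_div, abs_of_pos hd']
  refine div_le_div_of_nonneg_right ?_ hd'.le
  have := Nat.ceil_lt_add_one (mul_nonneg hθ hd'.le)
  rw [abs_le]
  constructor <;> linarith [Nat.le_ceil (θ * d)]

/-- `(1/d) log binomial(d, ⌈θd⌉) → H(θ)` uniformly in `θ ∈ [0,1]` as `d → ∞`, where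
`H(θ) = −θ log θ − (1−θ) log(1−θ)` is the natural entropy. -/
theorem stmt9 :
    TendstoUniformlyOn
      (fun (d : ℕ) (θ : ℝ) => (1 / (d : ℝ)) * Real.log (Nat.choose d ⌈θ * d⌉₊))
      (fun θ : ℝ => -θ * Real.log θ - (1 - θ) * Real.log (1 - θ))
      Filter.atTop (Set.Icc 0 1) := by
  have hH : (fun θ : ℝ => -θ * log θ - (1 - θ) * log (1 - θ)) = binEntropy := by
    ext θ; rw [binEntropy, log_inv, log_inv]; ring
  rw [hH, Metric.tendstoUniformlyOn_iff]
  intro ε hε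
  obtain ⟨δ, hδ, hunif⟩ := Metric.uniformContinuousOn_iff.1
    (isCompact_Icc.uniformContinuousOn_of_continuous binEntropy_continuous.continuousOn)
    (ε / 2) (half_pos hε)
  filter_upwards [tendsto_log_add_one_div_atTop.eventually (gt_mem_nhds (half_pos hε)),
    tendsto_one_div_atTop_nhds_zero_nat.eventually (gt_mem_nhds hδ), eventually_gt_atTop 0]
    with d hlog hδd hd θ hθ
  have hkd := natCeil_mul_le hθ.2 d
  have hkθ := dist_natCeil_mul_div_le hθ.1 hd
  set k := ⌈θ * d⌉₊
  have hk : (k / d : ℝ) ∈ Set.Icc 0 1 :=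
    ⟨by positivity, div_le_one_of_le₀ (by exact_mod_cast hkd) d.cast_nonneg⟩
  calc dist (binEntropy θ) (1 / d * log (d.choose k))
      ≤ dist (binEntropy θ) (binEntropy (k / d))
        + dist (binEntropy (k / d)) (1 / d * log (d.choose k)) := dist_triangle _ _ _
    _ < ε / 2 + ε / 2 := add_lt_add
        (hunif θ hθ _ hk (by rw [dist_comm]; exact hkθ.trans_lt hδd))
        ((dist_binEntropy_div_log_choose_le hd hkd).trans_lt hlog)
    _ = ε := add_halves ε
end

section
/- Let f, g be proper convex functions on ℝ^d, Q orthogonal, z₀ = x₀ + Q y₀. Assume f is subdifferentiable at x₀ but does not attain its global minimum at x₀, and similarly g at y₀. If (x₀, y₀) is the unique minimizer of f(x) subject to g(y) ≤ g(y₀) and x + Qy = z₀, then there exists λ > 0 such that (x₀, y₀) is a global minimizer (not necessarily unique) of f(x) + λ g(y) subject to x + Qy = z₀. -/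
/-!
Work in the value plane. The pairs `(s, t)` that strictly dominate some `(f (z₀ - Q y), g y)` form
an open convex set which, by minimality of `(x₀, y₀)`, misses `(f x₀, g y₀)`. A separating line
yields Fritz John multipliers `a, b ≥ 0`, not both zero, with `a f + b g` minimal at `(x₀, y₀)` on
the constraint. Since neither `f` nor `g` is minimal at its point, both multipliers are positive,
and `λ = b / a` works.
-/

open Set

theorem exists_coeffs_lt_of_convex_of_isOpen {C : Set (ℝ × ℝ)} (hconv : Convex ℝ C)
    (hopen : IsOpen C) {q : ℝ × ℝ} (hq : q ∉ C) :
    ∃ a b : ℝ, ∀ p ∈ C, a * q.1 + b * q.2 < a * p.1 + b * p.2 := by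
  obtain ⟨φ, hφ⟩ := geometric_hahn_banach_point_open hconv hopen hq
  have hcoord : ∀ p : ℝ × ℝ, φ p = φ (1, 0) * p.1 + φ (0, 1) * p.2 := by
    rintro ⟨s, t⟩
    have hst : ((s, t) : ℝ × ℝ) = s • ((1 : ℝ), (0 : ℝ)) + t • ((0 : ℝ), (1 : ℝ)) := by simp
    dsimp only
    rw [hst, map_add, map_smul, map_smul, smul_eq_mul, smul_eq_mul, mul_comm, mul_comm t]
  refine ⟨φ (1, 0), φ (0, 1), fun p hp => ?_⟩
  rw [← hcoord, ← hcoord]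
  exact hφ p hp

theorem nonneg_of_forall_lt_add_mul {a b c : ℝ} (h : ∀ t : ℝ, 0 ≤ t → c < a + b * t) :
    0 ≤ b := by
  by_contra! hb
  have hca : c < a := by simpa using h 0 le_rfl
  have hlarge := h ((a - c) / -b) (div_nonneg (by linarith) (by linarith))
  have hcancel : b * ((a - c) / -b) = c - a := by field_simp [hb.ne]; ring
  linarith

def strictUpperImage {E : Type*} (F G : E → ℝ) : Set (ℝ × ℝ) :=
  {p | ∃ y, F y < p.1 ∧ G y < p.2}

section StrictUpperImage

variable {E : Type*} {F G : E → ℝ}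

theorem isOpen_strictUpperImage : IsOpen (strictUpperImage F G) := by
  have : strictUpperImage F G = ⋃ y, Ioi (F y) ×ˢ Ioi (G y) := by
    ext p; simp [strictUpperImage]
  rw [this]
  exact isOpen_iUnion fun y => isOpen_Ioi.prod isOpen_Ioi

theorem add_mem_strictUpperImage (y : E) {s t : ℝ} (hs : 0 < s) (ht : 0 < t) :
    (F y + s, G y + t) ∈ strictUpperImage F G :=
  ⟨y, lt_add_of_pos_right _ hs, lt_add_of_pos_right _ ht⟩

theorem convex_strictUpperImage [AddCommGroup E] [Module ℝ E]
    (hF : ConvexOn ℝ univ F) (hG : ConvexOn ℝ univ G) :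
    Convex ℝ (strictUpperImage F G) := by
  rintro p ⟨y₁, hp₁, hp₂⟩ q ⟨y₂, hq₁, hq₂⟩ a b ha hb hab
  have hF' := hF.convex_strict_epigraph (x := (y₁, p.1)) ⟨mem_univ _, hp₁⟩
    (y := (y₂, q.1)) ⟨mem_univ _, hq₁⟩ ha hb hab
  have hG' := hG.convex_strict_epigraph (x := (y₁, p.2)) ⟨mem_univ _, hp₂⟩
    (y := (y₂, q.2)) ⟨mem_univ _, hq₂⟩ ha hb hab
  exact ⟨a • y₁ + b • y₂, hF'.2, hG'.2⟩

end StrictUpperImage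

section Multipliers

variable {E : Type*} [AddCommGroup E] [Module ℝ E] {F G : E → ℝ} {y₀ : E}

theorem exists_fritzJohn_multipliers (hF : ConvexOn ℝ univ F) (hG : ConvexOn ℝ univ G)
    (hmin : ∀ y, G y < G y₀ → F y₀ ≤ F y) :
    ∃ a b : ℝ, 0 ≤ a ∧ 0 ≤ b ∧ 0 < a + b ∧
      ∀ y, a * F y₀ + b * G y₀ ≤ a * F y + b * G y := by
  have hq : (F y₀, G y₀) ∉ strictUpperImage F G := fun ⟨y, hFy, hGy⟩ =>
    (hmin y hGy).not_gt hFy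
  obtain ⟨a, b, hsep⟩ := exists_coeffs_lt_of_convex_of_isOpen
    (convex_strictUpperImage hF hG) isOpen_strictUpperImage hq
  have hshift : ∀ y {s t : ℝ}, 0 < s → 0 < t →
      a * F y₀ + b * G y₀ < a * F y + b * G y + (a * s + b * t) := fun y s t hs ht => by
    have := hsep _ (add_mem_strictUpperImage y hs ht)
    dsimp only at this
    linarith
  have hab : 0 < a + b := by linarith [hshift y₀ one_pos one_pos]
  refine ⟨a, b, ?_, ?_, hab, fun y => le_of_forall_pos_lt_add fun ε hε => ?_⟩
  · exact nonneg_of_forall_lt_add_mul (a := a + b) (c := 0) fun t ht => by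
      linarith [hshift y₀ (s := t + 1) (by linarith) one_pos]
  · exact nonneg_of_forall_lt_add_mul (a := a + b) (c := 0) fun t ht => by
      linarith [hshift y₀ one_pos (t := t + 1) (by linarith)]
  · have hε' : a * (ε / (a + b)) + b * (ε / (a + b)) = ε := by field_simp
    have hpos : 0 < ε / (a + b) := div_pos hε hab
    linarith [hshift y hpos hpos]

theorem exists_pos_lagrange_multiplier (hF : ConvexOn ℝ univ F) (hG : ConvexOn ℝ univ G)
    (hmin : ∀ y, G y < G y₀ → F y₀ ≤ F y) (hFmin : ∃ y, F y < F y₀)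
    (hGmin : ∃ y, G y < G y₀) :
    ∃ lam > 0, ∀ y, F y₀ + lam * G y₀ ≤ F y + lam * G y := by
  obtain ⟨a, b, ha, hb, hab, hsep⟩ := exists_fritzJohn_multipliers hF hG hmin
  obtain ⟨yF, hyF⟩ := hFmin
  obtain ⟨yG, hyG⟩ := hGmin
  have ha' : 0 < a := by
    by_contra! ha0
    obtain rfl : a = 0 := le_antisymm ha0 ha
    have : b * G yG < b * G y₀ := mul_lt_mul_of_pos_left hyG (by linarith)
    linarith [hsep yG]
  have hb' : 0 < b := by
    by_contra! hb0
    obtain rfl : b = 0 := le_antisymm hb0 hb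
    have : a * F yF < a * F y₀ := mul_lt_mul_of_pos_left hyF ha'
    linarith [hsep yF]
  refine ⟨b / a, div_pos hb' ha', fun y => le_of_mul_le_mul_left ?_ ha'⟩
  have := hsep y
  field_simp
  linarith

end Multipliers

theorem stmt14_general {d : ℕ} (f g : EuclideanSpace ℝ (Fin d) → ℝ)
    (hf : ConvexOn ℝ Set.univ f) (hg : ConvexOn ℝ Set.univ g)
    (Q : EuclideanSpace ℝ (Fin d) ≃ₗᵢ[ℝ] EuclideanSpace ℝ (Fin d))
    (x₀ y₀ z₀ : EuclideanSpace ℝ (Fin d)) (hz : z₀ = x₀ + Q y₀)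
    (hfmin : ∃ v, f v < f x₀)
    (hgmin : ∃ v, g v < g y₀)
    (huniq : ∀ x y : EuclideanSpace ℝ (Fin d),
      x + Q y = z₀ → g y ≤ g y₀ → (x, y) ≠ (x₀, y₀) → f x₀ < f x) :
    ∃ lam > (0:ℝ), ∀ x y : EuclideanSpace ℝ (Fin d), x + Q y = z₀ →
      f x₀ + lam * g y₀ ≤ f x + lam * g y := by
  have hx₀ : z₀ - Q y₀ = x₀ := by rw [hz, add_sub_cancel_right]
  have hF : ConvexOn ℝ univ fun y => f (z₀ - Q y) := by
    simpa [Function.comp_def, sub_eq_add_neg] using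
      (hf.translate_right z₀).comp_linearMap (-Q.toLinearMap)
  have hmin : ∀ y, g y < g y₀ → f (z₀ - Q y₀) ≤ f (z₀ - Q y) := by
    intro y hy
    by_contra! hlt
    rw [hx₀] at hlt
    have hne : (z₀ - Q y, y) ≠ (x₀, y₀) := fun h => hlt.ne (congrArg (f ∘ Prod.fst) h)
    exact (huniq _ y (sub_add_cancel z₀ (Q y)) hy.le hne).not_gt hlt
  have hFmin : ∃ y, f (z₀ - Q y) < f (z₀ - Q y₀) := by
    obtain ⟨v, hv⟩ := hfmin
    exact ⟨Q.symm (z₀ - v), by simpa [hx₀] using hv⟩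
  obtain ⟨lam, hlam, hL⟩ := exists_pos_lagrange_multiplier hF hg hmin hFmin hgmin
  refine ⟨lam, hlam, fun x y hxy => ?_⟩
  simpa only [hx₀, ← eq_sub_of_add_eq hxy] using hL y

/-- Suppose `f` is subdifferentiable at `x₀` but does not attain its global minimum there,
and similarly for `g` at `y₀`. If `(x₀, y₀)` is the unique minimizer of the constrained
problem `min f(x) s.t. g(y) ≤ g(y₀), x + Qy = z₀`, then for some `λ > 0` the pair
`(x₀, y₀)` is a global minimizer of the Lagrangian `f(x) + λ g(y)` over the constraint
`x + Qy = z₀`. -/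
theorem stmt14 {d : ℕ} (f g : EuclideanSpace ℝ (Fin d) → ℝ)
    (hf : ConvexOn ℝ Set.univ f) (hg : ConvexOn ℝ Set.univ g)
    (Q : EuclideanSpace ℝ (Fin d) ≃ₗᵢ[ℝ] EuclideanSpace ℝ (Fin d))
    (x₀ y₀ z₀ : EuclideanSpace ℝ (Fin d)) (hz : z₀ = x₀ + Q y₀)
    (hfsub : ∃ u : EuclideanSpace ℝ (Fin d), ∀ v, f x₀ + (inner ℝ u (v - x₀) : ℝ) ≤ f v)
    (hfmin : ∃ v, f v < f x₀)
    (hgsub : ∃ u : EuclideanSpace ℝ (Fin d), ∀ v, g y₀ + (inner ℝ u (v - y₀) : ℝ) ≤ g v)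
    (hgmin : ∃ v, g v < g y₀)
    (huniq : ∀ x y : EuclideanSpace ℝ (Fin d),
      x + Q y = z₀ → g y ≤ g y₀ → (x, y) ≠ (x₀, y₀) → f x₀ < f x) :
    ∃ lam > (0:ℝ), ∀ x y : EuclideanSpace ℝ (Fin d), x + Q y = z₀ →
      f x₀ + lam * g y₀ ≤ f x + lam * g y :=
  stmt14_general f g hf hg Q x₀ y₀ z₀ hz hfmin hgmin huniq
end
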